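/- arXiv:1704.00376 — 5 statements merged into one kernel-verified Lean document; each statement's English description precedes it below -/
import Mathlib

section
/- For density matrices σ, ρ of the same dimension, tr(|σ^{1/2} ρ^{1/2}|) ≤ (tr σ + tr ρ)/2 = 1 (the tracial arithmetic–geometric mean inequality), with equality if and only if σ = ρ. -/
/-!
Put `A = σ^{1/2}`, `B = ρ^{1/2}` and let `W` be the contraction of the polar decomposition of
`AB`, so that `Wᴴ A B = |AB|`. Expanding the Hilbert–Schmidt norm of `A - B Wᴴ` gives
`tr σ + tr ρ = ‖A - B Wᴴ‖₂² + tr (B (1 - Wᴴ W) B) + 2 tr |AB|`, with both slack terms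
nonnegative. Equality forces `A = B Wᴴ` and `B (1 - Wᴴ W) B = 0`, hence
`σ = A Aᴴ = B Wᴴ W B = B B = ρ`.
-/

open scoped Matrix ComplexOrder

/-- The positive square root of a positive semidefinite matrix (junk value `0` otherwise). -/
noncomputable def matSqrt {d : ℕ} (x : Matrix (Fin d) (Fin d) ℂ) : Matrix (Fin d) (Fin d) ℂ :=
  @dite _ x.PosSemidef (Classical.propDecidable _) (fun h => (h.1.eigenvectorUnitary : Matrix (Fin d) (Fin d) ℂ) *
    Matrix.diagonal ((↑) ∘ (fun i => Real.sqrt (h.1.eigenvalues i))) *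
    (star h.1.eigenvectorUnitary : Matrix (Fin d) (Fin d) ℂ)) (fun _ => 0)

/-- The absolute value `|x| = (xᴴx)^{1/2}` of a matrix. -/
noncomputable def matAbs {d : ℕ} (x : Matrix (Fin d) (Fin d) ℂ) : Matrix (Fin d) (Fin d) ℂ :=
  matSqrt (xᴴ * x)

/-- Fidelity `F(σ,ρ) = tr |σ^{1/2} ρ^{1/2}|`. -/
noncomputable def fid {d : ℕ} (σ ρ : Matrix (Fin d) (Fin d) ℂ) : ℝ :=
  (matAbs (matSqrt σ * matSqrt ρ)).trace.re

/-- Bures distance `d_B(σ,ρ) = √(1 - F(σ,ρ))`. -/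
noncomputable def dB {d : ℕ} (σ ρ : Matrix (Fin d) (Fin d) ℂ) : ℝ :=
  Real.sqrt (1 - fid σ ρ)

open scoped MatrixOrder

namespace Matrix

variable {n 𝕜 : Type*} [Fintype n] [RCLike 𝕜]

lemma PosSemidef.re_trace_nonneg {M : Matrix n n 𝕜} (hM : M.PosSemidef) :
    0 ≤ RCLike.re M.trace :=
  (RCLike.nonneg_iff.mp hM.trace_nonneg).1

lemma PosSemidef.eq_zero_of_re_trace_eq_zero {M : Matrix n n 𝕜} (hM : M.PosSemidef)
    (h : RCLike.re M.trace = 0) : M = 0 :=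
  hM.trace_eq_zero_iff.mp <| RCLike.ext (by simpa using h)
    (by simpa using (RCLike.nonneg_iff.mp hM.trace_nonneg).2)

variable [DecidableEq n] {A B W : Matrix n n 𝕜}

lemma re_trace_mul_self_add_re_trace_mul_self (hA : A.IsHermitian) (hB : B.IsHermitian) :
    RCLike.re (A * A).trace + RCLike.re (B * B).trace =
      RCLike.re ((A - B * Wᴴ)ᴴ * (A - B * Wᴴ)).trace + RCLike.re (B * (1 - Wᴴ * W) * B).trace +
        2 * RCLike.re (Wᴴ * (A * B)).trace := by
  have h₁ : (A * (B * Wᴴ)).trace = (Wᴴ * (A * B)).trace := by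
    rw [← Matrix.mul_assoc, trace_mul_comm]
  have h₂ : (W * (B * A)).trace = star (Wᴴ * (A * B)).trace := by
    rw [← trace_conjTranspose, conjTranspose_mul, conjTranspose_mul, hA.eq, hB.eq,
      conjTranspose_conjTranspose, trace_mul_comm W]
  have h₃ : (W * (B * (B * Wᴴ))).trace = (B * (Wᴴ * (W * B))).trace := by
    simp only [← Matrix.mul_assoc]
    rw [trace_mul_comm _ Wᴴ, trace_mul_comm _ B]
    simp only [Matrix.mul_assoc]
    rw [← Matrix.mul_assoc, trace_mul_comm, Matrix.mul_assoc]
  have key : (A * A).trace + (B * B).trace =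
      ((A - B * Wᴴ)ᴴ * (A - B * Wᴴ)).trace + (B * (1 - Wᴴ * W) * B).trace +
        ((Wᴴ * (A * B)).trace + star (Wᴴ * (A * B)).trace) := by
    rw [conjTranspose_sub, conjTranspose_mul, hA.eq, hB.eq, conjTranspose_conjTranspose]
    simp only [sub_mul, mul_sub, Matrix.mul_one, trace_sub, Matrix.mul_assoc]
    rw [h₁, h₂, h₃]
    ring
  rw [← map_add, key, map_add, map_add, map_add, RCLike.star_def, RCLike.conj_re]
  ring

lemma two_mul_re_trace_le (hA : A.IsHermitian) (hB : B.IsHermitian)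
    (hW : (1 - Wᴴ * W).PosSemidef) :
    2 * RCLike.re (Wᴴ * (A * B)).trace ≤ RCLike.re (A * A).trace + RCLike.re (B * B).trace := by
  have h₁ := (posSemidef_conjTranspose_mul_self (A - B * Wᴴ)).re_trace_nonneg
  have h₂ := (hB.eq ▸ hW.conjTranspose_mul_mul_same B).re_trace_nonneg
  linarith [re_trace_mul_self_add_re_trace_mul_self (W := W) hA hB]

lemma mul_self_eq_of_two_mul_re_trace_eq (hA : A.IsHermitian) (hB : B.IsHermitian)
    (hW : (1 - Wᴴ * W).PosSemidef)
    (h : 2 * RCLike.re (Wᴴ * (A * B)).trace = RCLike.re (A * A).trace + RCLike.re (B * B).trace) :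
    A * A = B * B := by
  have hs₁ := posSemidef_conjTranspose_mul_self (A - B * Wᴴ)
  have hs₂ := hB.eq ▸ hW.conjTranspose_mul_mul_same B
  have hsum := re_trace_mul_self_add_re_trace_mul_self (W := W) hA hB
  have h₁ := hs₁.re_trace_nonneg
  have h₂ := hs₂.re_trace_nonneg
  have hs₁0 := hs₁.eq_zero_of_re_trace_eq_zero (by linarith)
  have hs₂0 := hs₂.eq_zero_of_re_trace_eq_zero (by linarith)
  have hAB : A = B * Wᴴ := sub_eq_zero.mp (conjTranspose_mul_self_eq_zero.mp hs₁0)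
  calc A * A = A * Aᴴ := by rw [hA.eq]
    _ = B * B - B * (1 - Wᴴ * W) * B := by
      rw [hAB, conjTranspose_mul, conjTranspose_conjTranspose, hB.eq]; noncomm_ring
    _ = B * B := by rw [hs₂0, sub_zero]

end Matrix

section Fidelity

variable {d : ℕ}

lemma matSqrt_eq_cfc {x : Matrix (Fin d) (Fin d) ℂ} (hx : x.PosSemidef) :
    matSqrt x = cfc Real.sqrt x := by
  rw [matSqrt, dif_pos hx, hx.1.cfc_eq]
  rfl

lemma matSqrt_eq_sqrt {x : Matrix (Fin d) (Fin d) ℂ} (hx : x.PosSemidef) :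
    matSqrt x = CFC.sqrt x := by
  rw [matSqrt_eq_cfc hx, CFC.sqrt_eq_real_sqrt x hx.nonneg, cfcₙ_eq_cfc]

lemma posSemidef_matSqrt (x : Matrix (Fin d) (Fin d) ℂ) : (matSqrt x).PosSemidef := by
  by_cases hx : x.PosSemidef
  · rw [matSqrt_eq_sqrt hx, ← Matrix.nonneg_iff_posSemidef]
    exact CFC.sqrt_nonneg x
  · rw [matSqrt, dif_neg hx]
    exact .zero

lemma matSqrt_mul_self {x : Matrix (Fin d) (Fin d) ℂ} (hx : x.PosSemidef) :
    matSqrt x * matSqrt x = x := by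
  rw [matSqrt_eq_sqrt hx]
  exact CFC.sqrt_mul_sqrt_self x hx.nonneg

lemma matAbs_of_posSemidef {x : Matrix (Fin d) (Fin d) ℂ} (hx : x.PosSemidef) :
    matAbs x = x := by
  have hx2 : (x ^ 2).PosSemidef := hx.pow 2
  rw [matAbs, hx.1.eq, ← sq, matSqrt_eq_sqrt hx2]
  exact CFC.sqrt_sq x hx.nonneg

lemma exists_contraction_conjTranspose_mul_eq_matAbs (X : Matrix (Fin d) (Fin d) ℂ) :
    ∃ W : Matrix (Fin d) (Fin d) ℂ, Wᴴ * X = matAbs X ∧ (1 - Wᴴ * W).PosSemidef := by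
  set K := Xᴴ * X
  have hK : K.PosSemidef := Matrix.posSemidef_conjTranspose_mul_self X
  have hcont (f : ℝ → ℝ) : ContinuousOn f (spectrum ℝ K) := K.finite_real_spectrum.continuousOn f
  set g := cfc (fun t : ℝ => (√t)⁻¹) K
  have hg : gᴴ = g := (cfc_predicate _ K : IsSelfAdjoint g)
  -- With `0⁻¹ = 0`, `g` is the pseudo-inverse of `|X|`, and `X * g` a partial isometry.
  have hgK : g * K = cfc Real.sqrt K := by
    conv_lhs => enter [2]; rw [← cfc_id' ℝ K]
    rw [← cfc_mul _ _ _ (hcont _) (hcont _)]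
    congr 1
    funext t
    rw [inv_mul_eq_div, Real.div_sqrt]
  refine ⟨X * g, ?_, ?_⟩
  · rw [Matrix.conjTranspose_mul, hg, Matrix.mul_assoc, hgK, matAbs, matSqrt_eq_cfc hK]
  · have : 1 - (X * g)ᴴ * (X * g) = cfc (fun t : ℝ => 1 - √t * (√t)⁻¹) K := by
      rw [Matrix.conjTranspose_mul, hg, Matrix.mul_assoc, ← Matrix.mul_assoc Xᴴ,
        ← Matrix.mul_assoc g, hgK,
        cfc_sub _ _ _ (hcont _) (hcont _), cfc_const_one ℝ K, cfc_mul _ _ _ (hcont _) (hcont _)]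
    rw [this, ← Matrix.nonneg_iff_posSemidef]
    refine cfc_nonneg fun t _ => ?_
    rcases eq_or_ne (√t) 0 with h | h <;> simp [h]

lemma exists_contraction_fid_eq (σ ρ : Matrix (Fin d) (Fin d) ℂ) :
    ∃ W : Matrix (Fin d) (Fin d) ℂ,
      (1 - Wᴴ * W).PosSemidef ∧ fid σ ρ = (Wᴴ * (matSqrt σ * matSqrt ρ)).trace.re := by
  obtain ⟨W, hWX, hW⟩ := exists_contraction_conjTranspose_mul_eq_matAbs (matSqrt σ * matSqrt ρ)
  exact ⟨W, hW, by rw [fid, hWX]⟩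

lemma two_mul_fid_le {σ ρ : Matrix (Fin d) (Fin d) ℂ} (hσ : σ.PosSemidef) (hρ : ρ.PosSemidef) :
    2 * fid σ ρ ≤ σ.trace.re + ρ.trace.re := by
  obtain ⟨W, hW, hfid⟩ := exists_contraction_fid_eq σ ρ
  simpa only [matSqrt_mul_self hσ, matSqrt_mul_self hρ, ← hfid, RCLike.re_to_complex] using
    Matrix.two_mul_re_trace_le (posSemidef_matSqrt σ).1 (posSemidef_matSqrt ρ).1 hW

lemma eq_of_two_mul_fid_eq {σ ρ : Matrix (Fin d) (Fin d) ℂ} (hσ : σ.PosSemidef)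
    (hρ : ρ.PosSemidef) (h : 2 * fid σ ρ = σ.trace.re + ρ.trace.re) : σ = ρ := by
  obtain ⟨W, hW, hfid⟩ := exists_contraction_fid_eq σ ρ
  have := Matrix.mul_self_eq_of_two_mul_re_trace_eq (posSemidef_matSqrt σ).1
    (posSemidef_matSqrt ρ).1 hW
  simp only [matSqrt_mul_self hσ, matSqrt_mul_self hρ, ← hfid, RCLike.re_to_complex] at this
  exact this h

lemma fid_self {σ : Matrix (Fin d) (Fin d) ℂ} (hσ : σ.PosSemidef) : fid σ σ = σ.trace.re := by
  rw [fid, matSqrt_mul_self hσ, matAbs_of_posSemidef hσ]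

end Fidelity

/-- tracial AM-GM: tr|σ^{1/2}ρ^{1/2}| ≤ (tr σ + tr ρ)/2 = 1,
with equality iff σ = ρ. -/
theorem fidelity_am_gm {d : ℕ} (σ ρ : Matrix (Fin d) (Fin d) ℂ)
    (hσ : σ.PosSemidef) (hρ : ρ.PosSemidef)
    (hσ1 : σ.trace = 1) (hρ1 : ρ.trace = 1) :
    fid σ ρ ≤ (σ.trace.re + ρ.trace.re) / 2 ∧
    (σ.trace.re + ρ.trace.re) / 2 = 1 ∧
    (fid σ ρ = (σ.trace.re + ρ.trace.re) / 2 ↔ σ = ρ) := by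
  refine ⟨by linarith [two_mul_fid_le hσ hρ], by simp [hσ1, hρ1], ?_⟩
  refine ⟨fun h => eq_of_two_mul_fid_eq hσ hρ (by linarith), ?_⟩
  rintro rfl
  rw [fid_self hσ]
  ring
end

section
/- If 𝓔 : A → A is a positive trace-preserving linear map satisfying the Schwarz inequality 𝓔(x)*𝓔(x) ≤ 𝓔(x*x) for all x, then 𝓔 is unital: 𝓔(1) = 1. -/
open scoped ComplexOrder

/-! The Schwarz inequality at `x = 1` says that `p = E 1` satisfies `0 ≤ p² ≤ p`, so
`‖p‖² ≤ ‖p‖` and hence `p ≤ 1`. The positive element `1 - p` has trace `τ 1 - τ (E 1) = 0`,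
so faithfulness of `τ` forces `p = 1`. -/

lemma CStarAlgebra.le_one_of_mul_self_le {A : Type*} [CStarAlgebra A] [PartialOrder A]
    [StarOrderedRing A] {p : A} (hp : 0 ≤ p) (hpp : p * p ≤ p) : p ≤ 1 := by
  have hp_sa : IsSelfAdjoint p := .of_nonneg hp
  have hpp_nonneg : 0 ≤ p * p := by simpa [hp_sa.star_eq] using star_mul_self_nonneg p
  have hnorm_sq : ‖p‖ ^ 2 ≤ ‖p‖ := by
    rw [← hp_sa.norm_mul_self]
    exact CStarAlgebra.norm_le_norm_of_nonneg_of_le hpp_nonneg hpp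
  have hnorm : ‖p‖ ≤ 1 := by nlinarith [norm_nonneg p]
  exact (CStarAlgebra.norm_le_one_iff_of_nonneg p hp).mp hnorm

lemma eq_of_le_of_map_eq_of_faithful {R M N : Type*} [Semiring R] [AddCommGroup M]
    [PartialOrder M] [IsOrderedAddMonoid M] [AddCommGroup N] [Module R M] [Module R N]
    (τ : M →ₗ[R] N) (hfaith : ∀ a : M, 0 ≤ a → τ a = 0 → a = 0) {a b : M} (hab : a ≤ b)
    (hτ : τ a = τ b) : a = b :=
  (sub_eq_zero.mp <| hfaith (b - a) (sub_nonneg.mpr hab) (by rw [map_sub, hτ, sub_self])).symm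

theorem schwarz_channel_unital_general {A : Type*}
    [CStarAlgebra A] [PartialOrder A] [StarOrderedRing A]
    (τ : A →ₗ[ℂ] ℂ)
    (hfaith : ∀ a : A, 0 ≤ a → τ a = 0 → a = 0)
    (E : A →ₗ[ℂ] A)
    (hEpos : ∀ a : A, 0 ≤ a → 0 ≤ E a)
    (hEtrace : ∀ x : A, τ (E x) = τ x)
    (hSchwarz : ∀ x : A, star (E x) * E x ≤ E (star x * x)) :
    E 1 = 1 := by
  have hp : 0 ≤ E 1 := hEpos 1 zero_le_one
  have hpp : E 1 * E 1 ≤ E 1 := by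
    simpa [(IsSelfAdjoint.of_nonneg hp).star_eq] using hSchwarz 1
  exact eq_of_le_of_map_eq_of_faithful τ hfaith (CStarAlgebra.le_one_of_mul_self_le hp hpp)
    (hEtrace 1)

/-- a positive trace-preserving Schwarz map on a unital C*-algebra with a
faithful trace is unital. -/
theorem schwarz_channel_unital {A : Type*}
    [CStarAlgebra A] [PartialOrder A] [StarOrderedRing A]
    (τ : A →ₗ[ℂ] ℂ)
    (hpos : ∀ a : A, 0 ≤ a → 0 ≤ τ a)
    (hfaith : ∀ a : A, 0 ≤ a → τ a = 0 → a = 0)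
    (htracial : ∀ x y : A, τ (x * y) = τ (y * x))
    (E : A →ₗ[ℂ] A)
    (hEpos : ∀ a : A, 0 ≤ a → 0 ≤ E a)
    (hEtrace : ∀ x : A, τ (E x) = τ x)
    (hSchwarz : ∀ x : A, star (E x) * E x ≤ E (star x * x)) :
    E 1 = 1 :=
  schwarz_channel_unital_general τ hfaith E hEpos hEtrace hSchwarz
end

section
/- Let 𝓔 be a channel on a tracial C*-algebra (A, τ) and let M_𝓔 be its multiplicative domain. Then for all density elements σ, ρ ∈ D_τ(A) ∩ M_𝓔, the fidelity is preserved: F_τ(𝓔(σ), 𝓔(ρ)) = F_τ(σ, ρ); hence 𝓔 is isometric for the Bures metric on D_τ(A) ∩ M_𝓔. -/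
open scoped ComplexOrder

/-!
Positive maps between C*-algebras are bounded and preserve adjoints, so the multiplicative domain
of a positive map `E` is a closed *-subalgebra and is therefore stable under the continuous
functional calculus; in particular it contains `√x` with every positive `x`. Multiplicativity then
gives `E (√x) * E (√x) = E x` with `E (√x) ≥ 0`, i.e. `E (√x) = √(E x)`. Applied to `ρ` and to
`√ρ σ √ρ`, together with `τ ∘ E = τ`, this shows that `E` does not change the fidelity.
-/

/-- Fidelity F_τ(σ,ρ) = τ((ρ^{1/2} σ ρ^{1/2})^{1/2}) in a C*-algebra with trace τ. -/
noncomputable def cFid {A : Type*} [CStarAlgebra A] [PartialOrder A] [StarOrderedRing A]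
    (τ : A →ₗ[ℂ] ℂ) (σ ρ : A) : ℝ :=
  (τ (CFC.sqrt (CFC.sqrt ρ * σ * CFC.sqrt ρ))).re

/-- The Bures distance d_B(σ,ρ) = √(1 - F_τ(σ,ρ)). -/
noncomputable def cdB {A : Type*} [CStarAlgebra A] [PartialOrder A] [StarOrderedRing A]
    (τ : A →ₗ[ℂ] ℂ) (σ ρ : A) : ℝ :=
  Real.sqrt (1 - cFid τ σ ρ)

/-- Membership in the multiplicative domain of a linear map. -/
def InMultDomain {A : Type*} [CStarAlgebra A] (E : A →ₗ[ℂ] A) (x : A) : Prop :=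
  ∀ y : A, E (x * y) = E x * E y ∧ E (y * x) = E y * E x

namespace PositiveLinearMap

section Star

variable {A B : Type*} [NonUnitalCStarAlgebra A] [PartialOrder A] [StarOrderedRing A]
  [NonUnitalCStarAlgebra B] [PartialOrder B] [StarOrderedRing B]

lemma isSelfAdjoint_apply (f : A →ₚ[ℂ] B) {a : A} (ha : IsSelfAdjoint a) :
    IsSelfAdjoint (f a) := by
  rw [← CFC.posPart_sub_negPart a ha, map_sub]
  exact .sub (.of_nonneg (f.map_nonneg (CFC.posPart_nonneg a)))
    (.of_nonneg (f.map_nonneg (CFC.negPart_nonneg a)))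

open ComplexStarModule in
lemma map_star (f : A →ₚ[ℂ] B) (a : A) : f (star a) = star (f a) := by
  nth_rw 1 2 [← realPart_add_I_smul_imaginaryPart a]
  simp [(f.isSelfAdjoint_apply (ℜ a).prop).star_eq, (f.isSelfAdjoint_apply (ℑ a).prop).star_eq]

end Star

variable {A : Type*} [CStarAlgebra A] [PartialOrder A] [StarOrderedRing A] (E : A →ₚ[ℂ] A)

def multDomain : NonUnitalStarSubalgebra ℂ A where
  carrier := {x | InMultDomain E.toLinearMap x}
  zero_mem' y := by simp
  add_mem' {x x'} hx hx' y := by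
    simp only [add_mul, mul_add, map_add, (hx y).1, (hx' y).1, (hx y).2, (hx' y).2, and_self]
  mul_mem' {x x'} hx hx' y := by
    constructor
    · rw [mul_assoc, (hx _).1, (hx' y).1, (hx x').1, mul_assoc]
    · rw [← mul_assoc, (hx' _).2, (hx x').1, (hx y).2, mul_assoc]
  smul_mem' c x hx y := by
    simp only [smul_mul_assoc, mul_smul_comm, map_smul, (hx y).1, (hx y).2, and_self]
  star_mem' {x} hx y := by
    have hE (a : A) : E.toLinearMap (star a) = star (E.toLinearMap a) := E.map_star a
    constructor
    · rw [← star_star y, ← star_mul, hE, (hx _).2]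
      simp only [star_mul, hE, star_star]
    · rw [← star_star y, ← star_mul, hE, (hx _).1]
      simp only [star_mul, hE, star_star]

lemma mem_multDomain {x : A} : x ∈ E.multDomain ↔ InMultDomain E.toLinearMap x := Iff.rfl

instance isClosed_multDomain : IsClosed (E.multDomain : Set A) := by
  have hE : Continuous E := map_continuous E
  have : (E.multDomain : Set A) =
      ⋂ y, {x | E (x * y) = E x * E y} ∩ {x | E (y * x) = E y * E x} := by
    ext x; simp [mem_multDomain, InMultDomain, Set.mem_iInter, forall_and]
  rw [this]
  exact isClosed_iInter fun y => .inter
    (isClosed_eq (hE.comp (continuous_mul_const y)) (hE.mul continuous_const))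
    (isClosed_eq (hE.comp (continuous_const_mul y)) (continuous_const.mul hE))

lemma sqrt_mem_multDomain {x : A} (hx : 0 ≤ x) (hxE : x ∈ E.multDomain) :
    CFC.sqrt x ∈ E.multDomain := by
  rw [CFC.sqrt, cfcₙ_nnreal_eq_real _ x hx]
  exact cfcₙ_mem (𝕜 := ℝ) (𝕜' := ℂ) _ hxE

lemma sqrt_apply_of_mem_multDomain {x : A} (hx : 0 ≤ x) (hxE : x ∈ E.multDomain) :
    CFC.sqrt (E x) = E (CFC.sqrt x) := by
  refine CFC.sqrt_unique ?_ (E.map_nonneg (CFC.sqrt_nonneg x))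
  exact ((E.sqrt_mem_multDomain hx hxE) (CFC.sqrt x)).1.symm.trans
    (congrArg E (CFC.sqrt_mul_sqrt_self x hx))

end PositiveLinearMap

lemma cFid_map_of_mem_multDomain {A : Type*} [CStarAlgebra A] [PartialOrder A]
    [StarOrderedRing A] (τ : A →ₗ[ℂ] ℂ) (E : A →ₚ[ℂ] A) (hEtrace : ∀ x, τ (E x) = τ x)
    {σ ρ : A} (hσ : 0 ≤ σ) (hρ : 0 ≤ ρ) (hσE : σ ∈ E.multDomain) (hρE : ρ ∈ E.multDomain) :
    cFid τ (E σ) (E ρ) = cFid τ σ ρ := by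
  set r := CFC.sqrt ρ
  have hrE : r ∈ E.multDomain := E.sqrt_mem_multDomain hρ hρE
  have hEr : CFC.sqrt (E ρ) = E r := E.sqrt_apply_of_mem_multDomain hρ hρE
  have hEz : E (r * σ * r) = E r * E σ * E r :=
    ((mul_mem hrE hσE) r).1.trans (congrArg (· * E r) (hrE σ).1)
  have hz : 0 ≤ r * σ * r := conjugate_nonneg_of_nonneg hσ (CFC.sqrt_nonneg ρ)
  have hzE : r * σ * r ∈ E.multDomain := mul_mem (mul_mem hrE hσE) hrE
  rw [cFid, cFid, hEr, ← hEz, E.sqrt_apply_of_mem_multDomain hz hzE, hEtrace]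

theorem channel_isometric_on_mult_domain_general {A : Type*}
    [CStarAlgebra A] [PartialOrder A] [StarOrderedRing A]
    (τ : A →ₗ[ℂ] ℂ)
    (E : A →ₗ[ℂ] A)
    (hEpos : ∀ a : A, 0 ≤ a → 0 ≤ E a)
    (hEtrace : ∀ x : A, τ (E x) = τ x)
    (σ ρ : A) (hσ : 0 ≤ σ) (hρ : 0 ≤ ρ)
    (hσm : InMultDomain E σ) (hρm : InMultDomain E ρ) :
    cFid τ (E σ) (E ρ) = cFid τ σ ρ ∧ cdB τ (E σ) (E ρ) = cdB τ σ ρ := by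
  have hFid : cFid τ (E σ) (E ρ) = cFid τ σ ρ :=
    cFid_map_of_mem_multDomain τ (.mk₀ E hEpos) hEtrace hσ hρ hσm hρm
  exact ⟨hFid, by rw [cdB, cdB, hFid]⟩

/-- a channel preserves fidelity (and hence the Bures distance) between density
elements of its multiplicative domain. -/
theorem channel_isometric_on_mult_domain {A : Type*}
    [CStarAlgebra A] [PartialOrder A] [StarOrderedRing A]
    (τ : A →ₗ[ℂ] ℂ)
    (hpos : ∀ a : A, 0 ≤ a → 0 ≤ τ a)
    (hfaith : ∀ a : A, 0 ≤ a → τ a = 0 → a = 0)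
    (htracial : ∀ x y : A, τ (x * y) = τ (y * x))
    (E : A →ₗ[ℂ] A)
    (hEpos : ∀ a : A, 0 ≤ a → 0 ≤ E a)
    (hEtrace : ∀ x : A, τ (E x) = τ x)
    (σ ρ : A) (hσ : 0 ≤ σ) (hρ : 0 ≤ ρ) (hσ1 : τ σ = 1) (hρ1 : τ ρ = 1)
    (hσm : InMultDomain E σ) (hρm : InMultDomain E ρ) :
    cFid τ (E σ) (E ρ) = cFid τ σ ρ ∧ cdB τ (E σ) (E ρ) = cdB τ σ ρ :=
  channel_isometric_on_mult_domain_general τ E hEpos hEtrace σ ρ hσ hρ hσm hρm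
end

section
/- If 𝓔 is a Bures contractive channel on (A, τ), then its multiplicative domain is trivial: M_𝓔 = ℂ·1. -/
open scoped ComplexOrder

/-- Bures contractive: strictly decreases the Bures distance between distinct density
elements. -/
def IsBuresContractive {A : Type*} [CStarAlgebra A] [PartialOrder A] [StarOrderedRing A]
    (τ : A →ₗ[ℂ] ℂ) (E : A →ₗ[ℂ] A) : Prop :=
  ∀ σ ρ : A, 0 ≤ σ → 0 ≤ ρ → τ σ = 1 → τ ρ = 1 → σ ≠ ρ →
    cdB τ (E σ) (E ρ) < cdB τ σ ρ

section Aux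

variable {A : Type*} [CStarAlgebra A] [PartialOrder A] [StarOrderedRing A]

lemma aux_smul_nonneg (r : ℝ) (hr : 0 ≤ r) {a : A} (ha : 0 ≤ a) :
    0 ≤ (r : ℂ) • a := by
  have key : (r:ℂ) • a = star ((Real.sqrt r : ℂ) • (1:A)) * a * ((Real.sqrt r : ℂ) • (1:A)) := by
    simp only [star_smul, star_one, smul_mul_assoc, mul_smul_comm, smul_smul, one_mul, mul_one]
    rw [show ((Real.sqrt r:ℂ) * star (Real.sqrt r:ℂ)) = (r:ℂ) by
      simp [Complex.star_def, Complex.conj_ofReal, ← Complex.ofReal_mul, Real.mul_self_sqrt hr]]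
  rw [key]
  exact star_left_conjugate_nonneg ha _

lemma aux_sqrt_smul_sq (t : ℝ) (ht : 0 ≤ t) {b : A} (hb : 0 ≤ b) :
    CFC.sqrt ((t:ℂ) • (b*b)) = (Real.sqrt t : ℂ) • b := by
  refine CFC.sqrt_unique ?_ (aux_smul_nonneg _ (Real.sqrt_nonneg t) hb)
  simp only [smul_mul_assoc, mul_smul_comm, smul_smul]
  rw [show ((Real.sqrt t : ℂ)) * (Real.sqrt t : ℂ) = (t:ℂ) by
    rw [← Complex.ofReal_mul, Real.mul_self_sqrt ht]]

lemma aux_fid_calc (τ : A →ₗ[ℂ] ℂ) (r s : ℝ) (hr : 0 ≤ r) (hs : 0 ≤ s)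
    (u b : A) (hb : 0 ≤ b) (hbub : b * u * b = b * b) :
    cFid τ ((r:ℂ) • u) ((s:ℂ) • (b*b)) = Real.sqrt (r*s) * (τ b).re := by
  unfold cFid
  rw [aux_sqrt_smul_sq s hs hb]
  have hmid : ((Real.sqrt s : ℂ) • b) * ((r:ℂ) • u) * ((Real.sqrt s : ℂ) • b)
      = ((r*s : ℝ) : ℂ) • (b*b) := by
    simp only [smul_mul_assoc, mul_smul_comm, smul_smul]
    rw [hbub]
    congr 1
    push_cast
    rw [show ((Real.sqrt s:ℂ) * ((r:ℂ) * (Real.sqrt s:ℂ))) = (r:ℂ) * ((Real.sqrt s:ℂ)*(Real.sqrt s:ℂ)) by ring,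
      show ((Real.sqrt s:ℂ))*(Real.sqrt s:ℂ) = (s:ℂ) by
        rw [← Complex.ofReal_mul, Real.mul_self_sqrt hs]]
  rw [hmid, aux_sqrt_smul_sq (r*s) (mul_nonneg hr hs) hb]
  rw [map_smul, smul_eq_mul]
  simp [Complex.mul_re]

end Aux

/-- a Bures contractive channel has trivial multiplicative domain ℂ·1. -/
theorem bures_contractive_trivial_mult_domain {A : Type*}
    [CStarAlgebra A] [PartialOrder A] [StarOrderedRing A]
    (τ : A →ₗ[ℂ] ℂ)
    (hpos : ∀ a : A, 0 ≤ a → 0 ≤ τ a)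
    (hfaith : ∀ a : A, 0 ≤ a → τ a = 0 → a = 0)
    (htracial : ∀ x y : A, τ (x * y) = τ (y * x))
    (E : A →ₗ[ℂ] A)
    (hEpos : ∀ a : A, 0 ≤ a → 0 ≤ E a)
    (hEtrace : ∀ x : A, τ (E x) = τ x)
    (hBC : IsBuresContractive τ E) :
    ∀ x : A, InMultDomain E x → ∃ c : ℂ, x = c • (1 : A) := by
  intro x hx
  by_cases htriv : (1:A) = 0
  · exact ⟨0, by rw [zero_smul, ← mul_one x, htriv, mul_zero]⟩
  have hone : (0:A) ≤ 1 := by simpa using star_mul_self_nonneg (1:A)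
  have hre : ∀ a : A, 0 ≤ a → τ a = ((τ a).re : ℂ) := by
    intro a ha
    have h := (Complex.nonneg_iff.mp (hpos a ha)).2
    exact Complex.ext rfl (by simp [← h])
  set n : ℝ := (τ 1).re with hn
  have hτ1 : τ 1 = (n:ℂ) := hre 1 hone
  have hnpos : 0 < n := by
    rcases lt_or_eq_of_le (Complex.nonneg_iff.mp (hpos 1 hone)).1 with h|h
    · exact h
    · have h' : n = 0 := hn.trans h.symm
      exact absurd (hfaith 1 hone (by rw [hτ1, h']; simp)) htriv
  -- closure properties of the multiplicative domain
  have memSmul : ∀ (c : ℂ) (a : A), InMultDomain E a → InMultDomain E (c • a) := by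
    intro c a ha y
    constructor
    · rw [smul_mul_assoc, map_smul, map_smul, (ha y).1, smul_mul_assoc]
    · rw [mul_smul_comm, map_smul, map_smul, (ha y).2, mul_smul_comm]
  have memAdd : ∀ a b : A, InMultDomain E a → InMultDomain E b → InMultDomain E (a + b) := by
    intro a b ha hb y
    constructor
    · rw [add_mul, map_add, map_add, (ha y).1, (hb y).1, add_mul]
    · rw [mul_add, map_add, map_add, (ha y).2, (hb y).2, mul_add]
  have memMul : ∀ a b : A, InMultDomain E a → InMultDomain E b → InMultDomain E (a * b) := by
    intro a b ha hb y
    have hab : E (a*b) = E a * E b := (ha b).1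
    constructor
    · rw [mul_assoc, (ha (b*y)).1, (hb y).1, hab, mul_assoc]
    · rw [← mul_assoc, (hb (y*a)).2, (ha y).2, hab, mul_assoc]
  -- the key contradiction lemma
  have L : ∀ d : A, InMultDomain E d → 0 ≤ d → (∀ c : ℂ, d * d ≠ c • 1) → False := by
    intro d hd hdpos hdns
    have hsd : star d = d := IsSelfAdjoint.of_nonneg hdpos
    have hdd : (0:A) ≤ d * d := by simpa [hsd] using star_mul_self_nonneg d
    have hα : τ (d*d) = ((τ (d*d)).re : ℂ) := hre _ hdd
    set α : ℝ := (τ (d*d)).re with hαdef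
    have hαnn : (0:ℝ) ≤ α := (Complex.nonneg_iff.mp (hpos _ hdd)).1
    have hd0 : d * d ≠ 0 := by
      intro h0; exact hdns 0 (by rw [h0, zero_smul])
    have hαpos : 0 < α := by
      rcases lt_or_eq_of_le hαnn with h|h
      · exact h
      · exact absurd (hfaith _ hdd (by rw [hα, ← h]; simp)) hd0
    set σ : A := ((n⁻¹ : ℝ) : ℂ) • 1 with hσdef
    set ρ : A := ((α⁻¹ : ℝ) : ℂ) • (d * d) with hρdef
    have hσpos : 0 ≤ σ := aux_smul_nonneg _ (inv_nonneg.mpr hnpos.le) hone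
    have hρpos : 0 ≤ ρ := aux_smul_nonneg _ (inv_nonneg.mpr hαnn) hdd
    have hτσ : τ σ = 1 := by
      rw [hσdef, map_smul, smul_eq_mul, hτ1, ← Complex.ofReal_mul, inv_mul_cancel₀ hnpos.ne']
      simp
    have hτρ : τ ρ = 1 := by
      rw [hρdef, map_smul, smul_eq_mul, hα, ← Complex.ofReal_mul,
        inv_mul_cancel₀ hαpos.ne']
      simp
    have hσρ : σ ≠ ρ := by
      intro h
      apply hdns ((α * n⁻¹ : ℝ) : ℂ)
      have h2 := congrArg (fun z => ((α : ℝ) : ℂ) • z) h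
      simp only [hσdef, hρdef, smul_smul, ← Complex.ofReal_mul,
        mul_inv_cancel₀ hαpos.ne', Complex.ofReal_one, one_smul] at h2
      exact h2.symm
    have hEdd : E (d * d) = E d * E d := (hd d).1
    have hEd1 : E d * E 1 = E d := by
      have h := (hd 1).1; rw [mul_one] at h; exact h.symm
    have hEdpos : 0 ≤ E d := hEpos d hdpos
    have hfid1 : cFid τ σ ρ = Real.sqrt (n⁻¹ * α⁻¹) * (τ d).re := by
      rw [hσdef, hρdef]
      exact aux_fid_calc τ _ _ (inv_nonneg.mpr hnpos.le) (inv_nonneg.mpr hαnn) 1 d hdpos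
        (by rw [mul_one])
    have hfid2 : cFid τ (E σ) (E ρ) = Real.sqrt (n⁻¹ * α⁻¹) * (τ (E d)).re := by
      rw [hσdef, hρdef, map_smul, map_smul, hEdd]
      exact aux_fid_calc τ _ _ (inv_nonneg.mpr hnpos.le) (inv_nonneg.mpr hαnn) (E 1) (E d)
        hEdpos (by rw [hEd1])
    have heq : cdB τ (E σ) (E ρ) = cdB τ σ ρ := by
      unfold cdB
      rw [hfid1, hfid2, hEtrace]
    exact absurd (hBC σ ρ hσpos hρpos hτσ hτρ hσρ) (by rw [heq]; exact lt_irrefl _)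
  -- E preserves selfadjointness
  have hsaE : ∀ a : A, IsSelfAdjoint a → IsSelfAdjoint (E a) := by
    intro a ha
    have hp : (0:A) ≤ algebraMap ℝ A ‖a‖ + a := by
      have h1 := ha.neg_algebraMap_norm_le_self
      have h2 := sub_nonneg.mpr h1
      rwa [sub_neg_eq_add, add_comm] at h2
    have hq : (0:A) ≤ algebraMap ℝ A ‖a‖ - a := sub_nonneg.mpr ha.le_algebraMap_norm_self
    have hsum : a = (2:ℂ)⁻¹ • ((algebraMap ℝ A ‖a‖ + a) - (algebraMap ℝ A ‖a‖ - a)) := by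
      rw [show (algebraMap ℝ A ‖a‖ + a) - (algebraMap ℝ A ‖a‖ - a) = a + a from by abel,
        ← two_smul ℂ a, smul_smul]
      norm_num
    have hEp := IsSelfAdjoint.of_nonneg (hEpos _ hp)
    have hEq := IsSelfAdjoint.of_nonneg (hEpos _ hq)
    have hEa : E a = (2:ℂ)⁻¹ • (E (algebraMap ℝ A ‖a‖ + a) - E (algebraMap ℝ A ‖a‖ - a)) := by
      conv_lhs => rw [hsum]
      rw [map_smul, map_sub]
    rw [hEa]
    exact IsSelfAdjoint.smul (show IsSelfAdjoint ((2:ℂ)⁻¹) from by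
      rw [isSelfAdjoint_iff, Complex.star_def, map_inv₀, Complex.conj_ofNat]) (hEp.sub hEq)
  -- decomposition into selfadjoint parts
  have hIcoef : Complex.I * (-Complex.I * (2:ℂ)⁻¹) = (2:ℂ)⁻¹ := by
    rw [neg_mul, mul_neg, ← mul_assoc, Complex.I_mul_I]
    norm_num
  have hsaH : ∀ a : A, IsSelfAdjoint ((2:ℂ)⁻¹ • (a + star a)) := by
    intro a
    rw [isSelfAdjoint_iff, star_smul, star_add, star_star,
      show star ((2:ℂ)⁻¹) = (2:ℂ)⁻¹ from by
        rw [Complex.star_def, map_inv₀, Complex.conj_ofNat], add_comm]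
  have hsaK : ∀ a : A, IsSelfAdjoint ((-Complex.I * (2:ℂ)⁻¹) • (a - star a)) := by
    intro a
    rw [isSelfAdjoint_iff, star_smul, star_sub, star_star,
      show star a - a = -(a - star a) from by abel, smul_neg, ← neg_smul]
    congr 1
    rw [Complex.star_def, map_mul, map_inv₀, Complex.conj_ofNat, map_neg, Complex.conj_I]
    ring
  have hsumA : ∀ a : A,
      (2:ℂ)⁻¹ • (a + star a) + Complex.I • ((-Complex.I * (2:ℂ)⁻¹) • (a - star a)) = a := by
    intro a
    rw [smul_smul, hIcoef]
    module
  have hdiffA : ∀ a : A,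
      (2:ℂ)⁻¹ • (a + star a) - Complex.I • ((-Complex.I * (2:ℂ)⁻¹) • (a - star a)) = star a := by
    intro a
    rw [smul_smul, hIcoef]
    module
  -- E is star-preserving
  have hstarE : ∀ a : A, E (star a) = star (E a) := by
    intro a
    have e1 : E (star a) = E ((2:ℂ)⁻¹ • (a + star a))
        - Complex.I • E ((-Complex.I * (2:ℂ)⁻¹) • (a - star a)) := by
      conv_lhs => rw [← hdiffA a]
      simp only [map_sub, map_smul]
    have e2 : E a = E ((2:ℂ)⁻¹ • (a + star a))
        + Complex.I • E ((-Complex.I * (2:ℂ)⁻¹) • (a - star a)) := by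
      conv_lhs => rw [← hsumA a]
      simp only [map_add, map_smul]
    rw [e1, e2, star_add, star_smul, (hsaE _ (hsaH a)).star_eq, (hsaE _ (hsaK a)).star_eq,
      Complex.star_def, Complex.conj_I, neg_smul, ← sub_eq_add_neg]
  -- multiplicative domain is star-closed
  have memStar : ∀ a : A, InMultDomain E a → InMultDomain E (star a) := by
    intro a ha y
    constructor
    · have h1 : star a * y = star (star y * a) := by rw [star_mul, star_star]
      rw [h1, hstarE, (ha (star y)).2, star_mul, ← hstarE, ← hstarE, star_star]
    · have h1 : y * star a = star (a * star y) := by rw [star_mul, star_star]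
      rw [h1, hstarE, (ha (star y)).1, star_mul, ← hstarE, ← hstarE, star_star]
  -- selfadjoint elements of the multiplicative domain are scalar
  have S : ∀ y : A, InMultDomain E y → IsSelfAdjoint y → ∃ c : ℂ, y = c • (1:A) := by
    intro y hy hysa
    by_contra hns
    push_neg at hns
    have hyy : InMultDomain E (y*y) := memMul y y hy hy
    have hyypos : (0:A) ≤ y*y := by
      have := star_mul_self_nonneg y
      rwa [hysa.star_eq] at this
    by_cases hcs : ∀ c : ℂ, (y*y) * (y*y) ≠ c • 1
    · exact L (y*y) hyy hyypos hcs
    push_neg at hcs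
    obtain ⟨c, hc⟩ := hcs
    have h4pos : (0:A) ≤ (y*y)*(y*y) := by
      have := star_mul_self_nonneg (y*y)
      rwa [(IsSelfAdjoint.of_nonneg hyypos).star_eq] at this
    have hτ4 : τ ((y*y)*(y*y)) = c * (n:ℂ) := by rw [hc, map_smul, smul_eq_mul, hτ1]
    have hcnn := hpos _ h4pos
    rw [hτ4] at hcnn
    obtain ⟨hre4, him4⟩ := Complex.nonneg_iff.mp hcnn
    have hcim : c.im = 0 := by
      have h5 : (c * (n:ℂ)).im = c.im * n := by simp [Complex.mul_im]
      rw [← him4] at h5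
      rcases mul_eq_zero.mp h5.symm with h|h
      · exact h
      · exact absurd h hnpos.ne'
    have hcre : (0:ℝ) ≤ c.re := by
      have h5 : (c * (n:ℂ)).re = c.re * n := by simp [Complex.mul_re, hcim]
      rw [h5] at hre4
      nlinarith [hre4, hnpos]
    set γ : ℝ := c.re with hγ
    have hcγ : c = (γ:ℂ) := Complex.ext rfl (by simp [hcim])
    have h1 : CFC.sqrt ((y*y)*(y*y)) = y*y := CFC.sqrt_unique rfl hyypos
    have h2 : CFC.sqrt ((y*y)*(y*y)) = (Real.sqrt γ : ℂ) • 1 := by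
      rw [hc, hcγ, show ((γ:ℂ)) • (1:A) = (γ:ℂ) • ((1:A)*(1:A)) from by rw [one_mul]]
      exact aux_sqrt_smul_sq γ hcre hone
    have hyy1 : y * y = (Real.sqrt γ : ℂ) • 1 := h1.symm.trans h2
    set m : ℝ := Real.sqrt (Real.sqrt γ) with hm
    have hmm : Real.sqrt γ = m * m := (Real.mul_self_sqrt (Real.sqrt_nonneg γ)).symm
    by_cases hm0 : m = 0
    · have hyy0 : y * y = 0 := by
        rw [hyy1, hmm, hm0]
        norm_num
      have hy0 : y = 0 := by
        have hnorm := CStarRing.norm_star_mul_self (x := y)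
        rw [hysa.star_eq, hyy0, norm_zero] at hnorm
        have : ‖y‖ = 0 := by
          rcases mul_self_eq_zero.mp hnorm.symm with h
          exact h
        exact norm_eq_zero.mp this
      exact hns 0 (by rw [hy0, zero_smul])
    have hmpos : 0 < m := lt_of_le_of_ne (Real.sqrt_nonneg _) (Ne.symm hm0)
    have h1mem : InMultDomain E (1:A) := by
      have hsm := memSmul ((((m*m)⁻¹ : ℝ)) : ℂ) _ hyy
      have heq1 : ((((m*m)⁻¹ : ℝ)) : ℂ) • (y*y) = (1:A) := by
        rw [hyy1, hmm, smul_smul, ← Complex.ofReal_mul,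
          inv_mul_cancel₀ (by positivity : (m*m : ℝ) ≠ 0), Complex.ofReal_one, one_smul]
      rwa [heq1] at hsm
    set e : A := (((2*m)⁻¹ : ℝ) : ℂ) • (y + ((m : ℝ) : ℂ) • 1) with he
    have hemem : InMultDomain E e := memSmul _ _ (memAdd _ _ hy (memSmul _ _ h1mem))
    have hesq : e * e = e := by
      rw [he]
      simp only [smul_mul_assoc, mul_smul_comm, smul_smul, mul_add, add_mul, one_mul, mul_one]
      rw [hyy1, hmm]
      have hmC : (m:ℂ) ≠ 0 := Complex.ofReal_ne_zero.mpr hm0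
      match_scalars
      · push_cast
        field_simp
        ring
      · push_cast
        field_simp
        ring
    have hesa : IsSelfAdjoint e := by
      rw [he, isSelfAdjoint_iff, star_smul, star_add, star_smul, star_one, hysa.star_eq]
      norm_num [Complex.star_def, Complex.conj_ofReal]
    have hepos : (0:A) ≤ e := by
      have := star_mul_self_nonneg e
      rwa [hesa.star_eq, hesq] at this
    refine L e hemem hepos ?_
    intro c' hc'
    rw [hesq] at hc'
    apply hns (((2*m : ℝ) : ℂ) * c' - ((m : ℝ) : ℂ))
    have h3 := congrArg (fun z => (((2*m : ℝ)) : ℂ) • z) hc'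
    rw [he, smul_smul, ← Complex.ofReal_mul,
      mul_inv_cancel₀ (by positivity : (2*m : ℝ) ≠ 0), Complex.ofReal_one, one_smul,
      smul_smul] at h3
    have h4 : y = (((2*m : ℝ) : ℂ) * c') • 1 - ((m : ℝ) : ℂ) • 1 := eq_sub_of_add_eq h3
    rw [← sub_smul] at h4
    exact h4
  -- conclude
  obtain ⟨c₁, hc₁⟩ := S _ (memSmul _ _ (memAdd _ _ hx (memStar x hx))) (hsaH x)
  obtain ⟨c₂, hc₂⟩ := S _ (memSmul _ _ (by
      rw [show x - star x = x + (-1:ℂ) • star x from by rw [neg_one_smul, ← sub_eq_add_neg]]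
      exact memAdd _ _ hx (memSmul _ _ (memStar x hx)))) (hsaK x)
  refine ⟨c₁ + Complex.I * c₂, ?_⟩
  conv_lhs => rw [← hsumA x]
  rw [hc₁, hc₂, smul_smul, ← add_smul]
end

section
/- If 𝓔 is a Bures contractive Schwarz channel on (A, τ), then its fixed point space is trivial: Fix 𝓔 = ℂ·1. -/
open scoped ComplexOrder

open scoped ComplexStarModule

/-!
A Schwarz map is positive, hence star-preserving, and it is unital because `1 - E 1` is positive
with trace zero. Strict Bures contraction forces any two fixed density elements to coincide, so
normalising a positive fixed element and the unit shows that positive fixed elements lie in `ℂ·1`.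
A self-adjoint fixed element `a` differs from the positive fixed element `a + ‖a‖·1` by a scalar,
and a general fixed element has fixed real and imaginary parts.
-/

section SchwarzMap

variable {A : Type*} [CStarAlgebra A] [PartialOrder A] [StarOrderedRing A] {E : A →ₗ[ℂ] A}

lemma map_nonneg_of_schwarz (hSchwarz : ∀ x : A, star (E x) * E x ≤ E (star x * x))
    {a : A} (ha : 0 ≤ a) : 0 ≤ E a := by
  obtain ⟨s, rfl⟩ := CStarAlgebra.nonneg_iff_eq_star_mul_self.mp ha
  exact (star_mul_self_nonneg _).trans (hSchwarz s)

lemma map_star_of_schwarz (hSchwarz : ∀ x : A, star (E x) * E x ≤ E (star x * x)) (a : A) :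
    E (star a) = star (E a) :=
  map_star (PositiveLinearMap.mk₀ E fun _ ↦ map_nonneg_of_schwarz hSchwarz) a

lemma map_one_of_schwarz {τ : A →ₗ[ℂ] ℂ} (hfaith : ∀ a : A, 0 ≤ a → τ a = 0 → a = 0)
    (hEtrace : ∀ x : A, τ (E x) = τ x)
    (hSchwarz : ∀ x : A, star (E x) * E x ≤ E (star x * x)) :
    E 1 = 1 := by
  have hp : 0 ≤ E 1 := map_nonneg_of_schwarz hSchwarz zero_le_one
  have hpp : star (E 1) * E 1 ≤ E 1 := by simpa using hSchwarz 1
  have hnorm : ‖E 1‖ ≤ 1 := by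
    have h := CStarAlgebra.norm_le_norm_of_nonneg_of_le (star_mul_self_nonneg _) hpp
    rw [CStarRing.norm_star_mul_self] at h
    nlinarith [norm_nonneg (E 1)]
  have hle : E 1 ≤ 1 := (CStarAlgebra.norm_le_one_iff_of_nonneg _ hp).mp hnorm
  exact (sub_eq_zero.mp (hfaith _ (sub_nonneg.mpr hle) (by simp [hEtrace]))).symm

end SchwarzMap

section BuresContractive

variable {A : Type*} [CStarAlgebra A] [PartialOrder A] [StarOrderedRing A]
  {τ : A →ₗ[ℂ] ℂ} {E : A →ₗ[ℂ] A}

lemma IsBuresContractive.eq_of_map_eq (hBC : IsBuresContractive τ E) {σ ρ : A}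
    (hσ : 0 ≤ σ) (hρ : 0 ≤ ρ) (hτσ : τ σ = 1) (hτρ : τ ρ = 1) (hEσ : E σ = σ) (hEρ : E ρ = ρ) :
    σ = ρ := by
  by_contra hne
  have h := hBC σ ρ hσ hρ hτσ hτρ hne
  rw [hEσ, hEρ] at h
  exact lt_irrefl _ h

lemma IsBuresContractive.exists_eq_smul_one_of_nonneg (hBC : IsBuresContractive τ E)
    (hpos : ∀ a : A, 0 ≤ a → 0 ≤ τ a) (hfaith : ∀ a : A, 0 ≤ a → τ a = 0 → a = 0)
    (hE1 : E 1 = 1) {u : A} (hu : 0 ≤ u) (hEu : E u = u) : ∃ c : ℂ, u = c • (1 : A) := by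
  by_cases hτu : τ u = 0
  · exact ⟨0, by simp [hfaith u hu hτu]⟩
  have hτ1 : τ 1 ≠ 0 := fun h ↦ hτu <| by
    rw [← mul_one u, hfaith 1 zero_le_one h, mul_zero, map_zero]
  have hdensity {a : A} (ha : 0 ≤ a) (hτa : τ a ≠ 0) : 0 ≤ (τ a)⁻¹ • a ∧ τ ((τ a)⁻¹ • a) = 1 :=
    ⟨smul_nonneg (inv_nonneg_of_nonneg (hpos a ha)) ha, by simp [hτa]⟩
  have hnormalized : (τ u)⁻¹ • u = (τ 1)⁻¹ • (1 : A) :=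
    hBC.eq_of_map_eq (hdensity hu hτu).1 (hdensity zero_le_one hτ1).1 (hdensity hu hτu).2
      (hdensity zero_le_one hτ1).2 (by rw [map_smul, hEu]) (by rw [map_smul, hE1])
  refine ⟨τ u * (τ 1)⁻¹, ?_⟩
  rw [mul_smul, ← hnormalized, smul_smul, mul_inv_cancel₀ hτu, one_smul]

lemma IsBuresContractive.exists_eq_smul_one_of_isSelfAdjoint (hBC : IsBuresContractive τ E)
    (hpos : ∀ a : A, 0 ≤ a → 0 ≤ τ a) (hfaith : ∀ a : A, 0 ≤ a → τ a = 0 → a = 0)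
    (hE1 : E 1 = 1) {a : A} (ha : IsSelfAdjoint a) (hEa : E a = a) : ∃ c : ℂ, a = c • (1 : A) := by
  have hu : 0 ≤ a + algebraMap ℝ A ‖a‖ := neg_le_iff_add_nonneg.mp ha.neg_algebraMap_norm_le_self
  have hEu : E (a + algebraMap ℝ A ‖a‖) = a + algebraMap ℝ A ‖a‖ := by
    rw [map_add, Algebra.algebraMap_eq_smul_one, LinearMap.map_smul_of_tower, hE1, hEa]
  obtain ⟨c, hc⟩ := hBC.exists_eq_smul_one_of_nonneg hpos hfaith hE1 hu hEu
  refine ⟨c - ‖a‖, ?_⟩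
  rw [sub_smul, ← hc, Algebra.algebraMap_eq_smul_one, Complex.coe_smul, add_sub_cancel_right]

end BuresContractive

theorem bures_contractive_trivial_fixed_points_general {A : Type*}
    [CStarAlgebra A] [PartialOrder A] [StarOrderedRing A]
    (τ : A →ₗ[ℂ] ℂ)
    (hpos : ∀ a : A, 0 ≤ a → 0 ≤ τ a)
    (hfaith : ∀ a : A, 0 ≤ a → τ a = 0 → a = 0)
    (E : A →ₗ[ℂ] A)
    (hEtrace : ∀ x : A, τ (E x) = τ x)
    (hSchwarz : ∀ x : A, star (E x) * E x ≤ E (star x * x))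
    (hBC : IsBuresContractive τ E) :
    ∀ x : A, E x = x → ∃ c : ℂ, x = c • (1 : A) := by
  intro x hx
  have hE1 : E 1 = 1 := map_one_of_schwarz hfaith hEtrace hSchwarz
  have hxstar : E (star x) = star x := by rw [map_star_of_schwarz hSchwarz, hx]
  obtain ⟨c, hc⟩ := hBC.exists_eq_smul_one_of_isSelfAdjoint hpos hfaith hE1 (ℜ x).2 <| by
    rw [realPart_apply_coe, LinearMap.map_smul_of_tower, map_add, hx, hxstar]
  obtain ⟨d, hd⟩ := hBC.exists_eq_smul_one_of_isSelfAdjoint hpos hfaith hE1 (ℑ x).2 <| by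
    rw [imaginaryPart_apply_coe, map_smul, LinearMap.map_smul_of_tower, map_sub, hx, hxstar]
  refine ⟨c + Complex.I * d, ?_⟩
  rw [← realPart_add_I_smul_imaginaryPart x, hc, hd, smul_smul, add_smul]

/-- a Bures contractive Schwarz channel has trivial fixed point space ℂ·1. -/
theorem bures_contractive_trivial_fixed_points {A : Type*}
    [CStarAlgebra A] [PartialOrder A] [StarOrderedRing A]
    (τ : A →ₗ[ℂ] ℂ)
    (hpos : ∀ a : A, 0 ≤ a → 0 ≤ τ a)
    (hfaith : ∀ a : A, 0 ≤ a → τ a = 0 → a = 0)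
    (htracial : ∀ x y : A, τ (x * y) = τ (y * x))
    (E : A →ₗ[ℂ] A)
    (hEtrace : ∀ x : A, τ (E x) = τ x)
    (hSchwarz : ∀ x : A, star (E x) * E x ≤ E (star x * x))
    (hBC : IsBuresContractive τ E) :
    ∀ x : A, E x = x → ∃ c : ℂ, x = c • (1 : A) :=
  bures_contractive_trivial_fixed_points_general τ hpos hfaith E hEtrace hSchwarz hBC
end
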